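/- Mass of the free Schwinger model: for m, T > 0 and Re(z) > −1, define C(z,T) := lim_{ε→0+} ∫_ℝ |ξ|^z e^{−ε|ξ|} cos(Tξ) dξ and S(z,T) := lim_{ε→0+} ∫_ℝ |ξ|^{z} ξ e^{−ε|ξ|} sin(Tξ) dξ, and set N(z,T) := 2m·C(z,T) − 2i·S(z,T) and D(z,T) := 2·C(z,T). Then lim_{T→∞} lim_{z→0} N(z,T)/D(z,T) = m. -/

import Mathlib

open Complex Filter Set

open MeasureTheory

-- bound integrability
lemma aux_int_rpow_exp {a : ℝ} (ha : -1 < a) {c : ℝ} (hc : 0 < c) :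
    IntegrableOn (fun t : ℝ => t ^ a * Real.exp (-c * t)) (Ioi 0) := by
  have := integrableOn_rpow_mul_exp_neg_mul_rpow ha one_pos hc
  simpa [Real.rpow_one] using this

-- continuity of the complex integrand on Ioi 0
lemma aux_contOn {b : ℂ} (s : ℂ) :
    ContinuousOn (fun t : ℝ => (t : ℂ) ^ (b - 1) * Complex.exp (-(s * t))) (Ioi 0) := by
  intro t ht
  apply ContinuousWithinAt.mul
  · exact ((continuousAt_cpow_const
      (Complex.mem_slitPlane_iff.mpr (Or.inl (by simpa using ht)))).comp
      Complex.continuous_ofReal.continuousAt).continuousWithinAt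
  · exact (Complex.continuous_exp.comp (by continuity)).continuousAt.continuousWithinAt

lemma aux_norm_integrand {b : ℂ} {s : ℂ} {t : ℝ} (ht : 0 < t) :
    ‖(t : ℂ) ^ (b - 1) * Complex.exp (-(s * t))‖ = t ^ (b.re - 1) * Real.exp (-s.re * t) := by
  rw [norm_mul,
    Complex.norm_cpow_eq_rpow_re_of_pos ht, Complex.norm_exp]
  simp [Complex.sub_re, Complex.mul_re]

lemma aux_intOn_cpow_exp {b : ℂ} (hb : 0 < b.re) {s : ℂ} (hs : 0 < s.re) :
    IntegrableOn (fun t : ℝ => (t : ℂ) ^ (b - 1) * Complex.exp (-(s * t))) (Ioi 0) := by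
  apply Integrable.mono' (aux_int_rpow_exp (a := b.re - 1) (by linarith) hs)
  · exact (aux_contOn s).aestronglyMeasurable measurableSet_Ioi
  · filter_upwards [ae_restrict_mem measurableSet_Ioi] with t ht
    rw [aux_norm_integrand ht]

lemma aux_contOn' {b : ℂ} (s : ℂ) :
    ContinuousOn (fun t : ℝ => (t : ℂ) ^ (b - 1) * (Complex.exp (-(s * t)) * (-(t:ℂ)))) (Ioi 0) := by
  intro t ht
  apply ContinuousWithinAt.mul
  · exact ((continuousAt_cpow_const
      (Complex.mem_slitPlane_iff.mpr (Or.inl (by simpa using ht)))).comp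
      Complex.continuous_ofReal.continuousAt).continuousWithinAt
  · exact ((Complex.continuous_exp.comp (by continuity)).mul
      (by continuity)).continuousAt.continuousWithinAt

-- the key Laplace/Gamma identity for complex s
lemma aux_gamma_laplace {b : ℂ} (hb : 0 < b.re) {s : ℂ} (hs : 0 < s.re) :
    ∫ t in Ioi (0:ℝ), (t : ℂ) ^ (b - 1) * Complex.exp (-(s * t)) =
      Complex.Gamma b * s ^ (-b) := by
  set U : Set ℂ := {w : ℂ | 0 < w.re} with hU
  have hUopen : IsOpen U := isOpen_lt continuous_const Complex.continuous_re
  have hUconn : IsPreconnected U := (convex_halfSpace_re_gt 0).isPreconnected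
  set F : ℂ → ℂ := fun w => ∫ t in Ioi (0:ℝ), (t : ℂ) ^ (b - 1) * Complex.exp (-(w * t)) with hF
  set G : ℂ → ℂ := fun w => Complex.Gamma b * w ^ (-b) with hG
  have hFdiff : DifferentiableOn ℂ F U := by
    intro w₀ hw₀
    have hw₀' : (0:ℝ) < w₀.re := hw₀
    have key := hasDerivAt_integral_of_dominated_loc_of_deriv_le
      (μ := volume.restrict (Ioi (0:ℝ)))
      (F := fun w (t : ℝ) => (t : ℂ) ^ (b - 1) * Complex.exp (-(w * t)))
      (F' := fun w (t : ℝ) => (t : ℂ) ^ (b - 1) * (Complex.exp (-(w * t)) * (-(t : ℂ))))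
      (x₀ := w₀) (bound := fun t : ℝ => t ^ b.re * Real.exp (-(w₀.re / 2) * t))
      (Metric.ball_mem_nhds w₀ (half_pos hw₀'))
      (Eventually.of_forall fun w =>
        (aux_contOn (b := b) w).aestronglyMeasurable measurableSet_Ioi)
      (aux_intOn_cpow_exp hb hw₀')
      ((aux_contOn' (b := b) w₀).aestronglyMeasurable measurableSet_Ioi)
      ?_ (aux_int_rpow_exp (by linarith) (half_pos hw₀')) ?_
    · exact (key.2.differentiableAt).differentiableWithinAt
    · -- bound
      filter_upwards [ae_restrict_mem measurableSet_Ioi] with t ht w hw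
      have ht' : (0:ℝ) < t := ht
      have hre : w₀.re / 2 ≤ w.re := by
        have h1 := Complex.abs_re_le_norm (w - w₀)
        have h2 : ‖w - w₀‖ < w₀.re / 2 := by
          simpa [Metric.mem_ball, Complex.dist_eq] using hw
        have h3 := abs_le.mp (le_of_lt (lt_of_le_of_lt h1 h2))
        simp only [Complex.sub_re] at h3
        linarith [h3.1]
      rw [norm_mul, norm_mul,
        Complex.norm_cpow_eq_rpow_re_of_pos ht', Complex.norm_exp]
      have h1 : ‖(-(t:ℂ))‖ = t := by
        simp [Complex.norm_real, abs_of_pos ht']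
      rw [h1]
      have hexp : (-(w * (t:ℂ))).re = -w.re * t := by
        simp [Complex.mul_re]
      rw [hexp]
      have hpow : t ^ (b - 1).re * t = t ^ b.re := by
        rw [Complex.sub_re, Complex.one_re]
        nth_rewrite 2 [← Real.rpow_one t]
        rw [← Real.rpow_add ht']
        ring_nf
      have hee : Real.exp (-w.re * t) ≤ Real.exp (-(w₀.re / 2) * t) := by
        apply Real.exp_le_exp.mpr
        nlinarith
      calc t ^ (b - 1).re * (Real.exp (-w.re * t) * t)
          = (t ^ (b - 1).re * t) * Real.exp (-w.re * t) := by ring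
        _ = t ^ b.re * Real.exp (-w.re * t) := by rw [hpow]
        _ ≤ t ^ b.re * Real.exp (-(w₀.re / 2) * t) :=
            mul_le_mul_of_nonneg_left hee (Real.rpow_nonneg ht'.le _)
    · -- differentiability
      filter_upwards [ae_restrict_mem measurableSet_Ioi] with t ht w hw
      have hd : HasDerivAt (fun w : ℂ => -(w * (t:ℂ))) (-(t:ℂ)) w := by
        simpa only [id, one_mul, Pi.neg_def] using ((hasDerivAt_id w).mul_const (t:ℂ)).neg
      exact (hd.cexp).const_mul _
  have hGdiff : DifferentiableOn ℂ G U := by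
    intro w hw
    apply DifferentiableAt.differentiableWithinAt
    apply DifferentiableAt.const_mul
    exact differentiableAt_id.cpow (differentiableAt_const _) (Or.inl hw)
  have hFA : AnalyticOnNhd ℂ F U := hFdiff.analyticOnNhd hUopen
  have hGA : AnalyticOnNhd ℂ G U := hGdiff.analyticOnNhd hUopen
  have hreal : ∀ r : ℝ, 0 < r → F r = G r := by
    intro r hr
    have h1 := Complex.integral_cpow_mul_exp_neg_mul_Ioi hb hr
    have harg : ((r : ℂ)).arg ≠ Real.pi := by
      rw [Complex.arg_ofReal_of_nonneg hr.le]
      exact Real.pi_ne_zero.symm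
    have h2 : ((1:ℂ) / r) ^ b = (r:ℂ) ^ (-b) := by
      rw [one_div, Complex.inv_cpow _ _ harg, ← Complex.cpow_neg]
    rw [hF, hG]
    simp only
    rw [h1, h2]
    ring
  have hfreq : ∃ᶠ w in nhdsWithin (1:ℂ) {(1:ℂ)}ᶜ, F w = G w := by
    have hseq : Tendsto (fun n : ℕ => ((1 + ((n:ℝ)+1)⁻¹ : ℝ) : ℂ)) atTop
        (nhdsWithin (1:ℂ) {(1:ℂ)}ᶜ) := by
      apply tendsto_nhdsWithin_of_tendsto_nhds_of_eventually_within
      · have h0 : Tendsto (fun n : ℕ => (1 + ((n:ℝ)+1)⁻¹ : ℝ)) atTop (nhds 1) := by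
          have := tendsto_one_div_add_atTop_nhds_zero_nat (𝕜 := ℝ)
          simp only [one_div] at this
          simpa using tendsto_const_nhds.add this
        have h2 := (Complex.continuous_ofReal.tendsto 1).comp h0
        simpa [Function.comp_def] using h2
      · filter_upwards with n
        simp only [mem_compl_iff, mem_singleton_iff]
        intro h
        have h' : (1 + ((n:ℝ)+1)⁻¹ : ℝ) = 1 := by exact_mod_cast h
        have h'' : ((n:ℝ)+1)⁻¹ = 0 := by linarith
        exact (inv_ne_zero (by positivity : ((n:ℝ)+1) ≠ 0)) h''
    exact hseq.frequently ((Eventually.of_forall fun n => hreal _ (by positivity)).frequently)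
  have h1U : (1:ℂ) ∈ U := by simp [hU]
  have := hFA.eqOn_of_preconnected_of_frequently_eq hGA hUconn h1U hfreq
  exact this hs

lemma aux_even_integral {f : ℝ → ℂ} (he : ∀ x, f (-x) = f x) (hf : IntegrableOn f (Ioi 0)) :
    ∫ x, f x = 2 * ∫ x in Ioi 0, f x := by
  have m : MeasurableEmbedding fun x : ℝ => -x :=
    (Homeomorph.neg ℝ).measurableEmbedding
  have hIic : IntegrableOn f (Iic 0) := by
    rw [← Measure.map_neg_eq_self (volume : Measure ℝ)]
    rw [m.integrableOn_map_iff]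
    simp only [Function.comp_def, he, neg_preimage, neg_Iic, neg_zero]
    exact Iff.mpr integrableOn_Ici_iff_integrableOn_Ioi hf
  have h1 : ∫ x in Iic (0:ℝ), f x = ∫ x in Ioi (0:ℝ), f x := by
    have := integral_comp_neg_Ioi (0:ℝ) f
    simp only [neg_zero] at this
    rw [← this]
    exact setIntegral_congr_fun measurableSet_Ioi fun x _ => (he x)
  calc ∫ x, f x = ∫ x in Iic 0 ∪ Ioi 0, f x := by rw [Iic_union_Ioi, setIntegral_univ]
    _ = (∫ x in Iic (0:ℝ), f x) + ∫ x in Ioi (0:ℝ), f x :=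
        setIntegral_union (Iic_disjoint_Ioi le_rfl) measurableSet_Ioi hIic hf
    _ = 2 * ∫ x in Ioi (0:ℝ), f x := by rw [h1]; ring

lemma aux_C_integral {z : ℂ} (hz : -1 < z.re) {T : ℝ} (hT : 0 < T) {ε : ℝ} (hε : 0 < ε) :
    (∫ ξ : ℝ, ((|ξ| : ℝ) : ℂ) ^ z * Real.exp (-ε * |ξ|) * Complex.cos (T * ξ)) =
      Complex.Gamma (z+1) *
        (((ε : ℂ) - I*T) ^ (-(z+1)) + ((ε : ℂ) + I*T) ^ (-(z+1))) := by
  set g₁ : ℝ → ℂ := fun t => (t:ℂ) ^ ((z+1) - 1) * Complex.exp (-((((ε:ℂ) - I*T)) * t)) with hg₁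
  set g₂ : ℝ → ℂ := fun t => (t:ℂ) ^ ((z+1) - 1) * Complex.exp (-((((ε:ℂ) + I*T)) * t)) with hg₂
  have hre1 : (0:ℝ) < ((ε:ℂ) - I*T).re := by simp [hε]
  have hre2 : (0:ℝ) < ((ε:ℂ) + I*T).re := by simp [hε]
  have hbre : (0:ℝ) < (z+1).re := by simp; linarith
  set f : ℝ → ℂ := fun ξ => ((|ξ| : ℝ) : ℂ) ^ z * Real.exp (-ε * |ξ|) * Complex.cos (T * ξ)
    with hf
  have he : ∀ x, f (-x) = f x := by
    intro x
    simp only [hf, abs_neg]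
    congr 1
    push_cast
    rw [mul_neg, Complex.cos_neg]
  have hpt : ∀ t ∈ Ioi (0:ℝ), f t = (g₁ t + g₂ t) / 2 := by
    intro t ht
    have ht' : (0:ℝ) < t := ht
    have habs : |t| = t := abs_of_pos ht'
    have hexp1 : ((Real.exp (-ε * t) : ℝ) : ℂ) * Complex.exp ((T:ℂ) * t * I) =
        Complex.exp (-((((ε:ℂ) - I*T)) * t)) := by
      rw [Complex.ofReal_exp, ← Complex.exp_add]
      congr 1
      push_cast
      ring
    have hexp2 : ((Real.exp (-ε * t) : ℝ) : ℂ) * Complex.exp (-((T:ℂ) * t) * I) =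
        Complex.exp (-((((ε:ℂ) + I*T)) * t)) := by
      rw [Complex.ofReal_exp, ← Complex.exp_add]
      congr 1
      push_cast
      ring
    have hzz : (z + 1) - 1 = z := by ring
    simp only [hf, hg₁, hg₂, habs, hzz]
    rw [Complex.cos]
    rw [← hexp1, ← hexp2]
    ring
  have hint1 : IntegrableOn g₁ (Ioi 0) := aux_intOn_cpow_exp hbre hre1
  have hint2 : IntegrableOn g₂ (Ioi 0) := aux_intOn_cpow_exp hbre hre2
  have hfint : IntegrableOn f (Ioi 0) := by
    have h' : IntegrableOn (fun t => (g₁ t + g₂ t) / 2) (Ioi 0) := (hint1.add hint2).div_const 2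
    exact h'.congr_fun (fun t ht => (hpt t ht).symm) measurableSet_Ioi
  have := aux_even_integral he hfint
  rw [hf] at this
  rw [this]
  have : ∫ t in Ioi (0:ℝ), f t = ((∫ t in Ioi (0:ℝ), g₁ t) + ∫ t in Ioi (0:ℝ), g₂ t) / 2 := by
    rw [setIntegral_congr_fun measurableSet_Ioi hpt, integral_div, integral_add hint1 hint2]
  rw [this, aux_gamma_laplace hbre hre1, aux_gamma_laplace hbre hre2]
  ring

lemma aux_S_integral {z : ℂ} (hz : -1 < z.re) {T : ℝ} (hT : 0 < T) {ε : ℝ} (hε : 0 < ε) :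
    (∫ ξ : ℝ, ((|ξ| : ℝ) : ℂ) ^ z * (ξ : ℂ) * Real.exp (-ε * |ξ|) * Complex.sin (T * ξ)) =
      -I * Complex.Gamma (z+2) *
        (((ε : ℂ) - I*T) ^ (-(z+2)) - ((ε : ℂ) + I*T) ^ (-(z+2))) := by
  set g₁ : ℝ → ℂ := fun t => (t:ℂ) ^ ((z+2) - 1) * Complex.exp (-((((ε:ℂ) - I*T)) * t)) with hg₁
  set g₂ : ℝ → ℂ := fun t => (t:ℂ) ^ ((z+2) - 1) * Complex.exp (-((((ε:ℂ) + I*T)) * t)) with hg₂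
  have hre1 : (0:ℝ) < ((ε:ℂ) - I*T).re := by simp [hε]
  have hre2 : (0:ℝ) < ((ε:ℂ) + I*T).re := by simp [hε]
  have hbre : (0:ℝ) < (z+2).re := by simp; linarith
  set f : ℝ → ℂ := fun ξ => ((|ξ| : ℝ) : ℂ) ^ z * (ξ : ℂ) * Real.exp (-ε * |ξ|)
      * Complex.sin (T * ξ) with hf
  have he : ∀ x, f (-x) = f x := by
    intro x
    simp only [hf, abs_neg]
    push_cast
    rw [show ((T:ℂ) * -(x:ℂ)) = -((T:ℂ) * x) by ring, Complex.sin_neg]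
    ring
  have hpt : ∀ t ∈ Ioi (0:ℝ), f t = (-I) * (g₁ t - g₂ t) / 2 := by
    intro t ht
    have ht' : (0:ℝ) < t := ht
    have habs : |t| = t := abs_of_pos ht'
    have ht0 : (t:ℂ) ≠ 0 := by exact_mod_cast ht'.ne'
    have hzz : (t:ℂ) ^ ((z+2) - 1) = (t:ℂ) ^ z * t := by
      have : (z + 2) - 1 = z + 1 := by ring
      rw [this, Complex.cpow_add _ _ ht0, Complex.cpow_one]
    have hexp1 : ((Real.exp (-ε * t) : ℝ) : ℂ) * Complex.exp ((T:ℂ) * t * I) =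
        Complex.exp (-((((ε:ℂ) - I*T)) * t)) := by
      rw [Complex.ofReal_exp, ← Complex.exp_add]
      congr 1
      push_cast
      ring
    have hexp2 : ((Real.exp (-ε * t) : ℝ) : ℂ) * Complex.exp (-((T:ℂ) * t) * I) =
        Complex.exp (-((((ε:ℂ) + I*T)) * t)) := by
      rw [Complex.ofReal_exp, ← Complex.exp_add]
      congr 1
      push_cast
      ring
    simp only [hf, hg₁, hg₂, habs, hzz]
    rw [Complex.sin]
    rw [← hexp1, ← hexp2]
    ring
  have hint1 : IntegrableOn g₁ (Ioi 0) := aux_intOn_cpow_exp hbre hre1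
  have hint2 : IntegrableOn g₂ (Ioi 0) := aux_intOn_cpow_exp hbre hre2
  have hfint : IntegrableOn f (Ioi 0) := by
    have h' : IntegrableOn (fun t => (-I) * (g₁ t - g₂ t) / 2) (Ioi 0) :=
      (((hint1.sub hint2).const_mul (-I)).div_const 2)
    exact h'.congr_fun (fun t ht => (hpt t ht).symm) measurableSet_Ioi
  have heven := aux_even_integral he hfint
  rw [hf] at heven
  rw [heven]
  have hsplit : ∫ t in Ioi (0:ℝ), f t =
      (-I) * ((∫ t in Ioi (0:ℝ), g₁ t) - ∫ t in Ioi (0:ℝ), g₂ t) / 2 := by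
    rw [setIntegral_congr_fun measurableSet_Ioi hpt]
    rw [show (fun t => (-I) * (g₁ t - g₂ t) / 2) = fun t => (-I/2) * (g₁ t - g₂ t) by
      funext t; ring]
    rw [integral_const_mul, integral_sub hint1 hint2]
    ring
  rw [hsplit, aux_gamma_laplace hbre hre1, aux_gamma_laplace hbre hre2]
  ring

noncomputable def Cfun (z : ℂ) (T : ℝ) : ℂ :=
  Complex.Gamma (z+1) * ((-(I*(T:ℂ))) ^ (-(z+1)) + (I*(T:ℂ)) ^ (-(z+1)))

noncomputable def Sfun (z : ℂ) (T : ℝ) : ℂ :=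
  -I * Complex.Gamma (z+2) * ((-(I*(T:ℂ))) ^ (-(z+2)) - (I*(T:ℂ)) ^ (-(z+2)))

lemma aux_base_tendsto {T : ℝ} (hT : 0 < T) (w : ℂ) :
    Tendsto (fun ε : ℝ => ((ε:ℂ) - I*T) ^ w) (nhdsWithin 0 (Ioi 0))
      (nhds ((-(I*(T:ℂ))) ^ w)) := by
  have hbase : Tendsto (fun ε : ℝ => ((ε:ℂ) - I*T)) (nhds 0) (nhds (-(I*(T:ℂ)))) := by
    have hc : Continuous fun ε : ℝ => ((ε:ℂ) - I*T) :=
      Complex.continuous_ofReal.sub continuous_const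
    simpa using hc.tendsto 0
  have hslit : (-(I*(T:ℂ))) ∈ Complex.slitPlane :=
    Complex.mem_slitPlane_iff.mpr (Or.inr (by simp [hT.ne']))
  exact ((continuousAt_cpow_const hslit).tendsto.comp hbase).mono_left nhdsWithin_le_nhds

lemma aux_base_tendsto' {T : ℝ} (hT : 0 < T) (w : ℂ) :
    Tendsto (fun ε : ℝ => ((ε:ℂ) + I*T) ^ w) (nhdsWithin 0 (Ioi 0))
      (nhds ((I*(T:ℂ)) ^ w)) := by
  have hbase : Tendsto (fun ε : ℝ => ((ε:ℂ) + I*T)) (nhds 0) (nhds (I*(T:ℂ))) := by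
    have hc : Continuous fun ε : ℝ => ((ε:ℂ) + I*T) :=
      Complex.continuous_ofReal.add continuous_const
    simpa using hc.tendsto 0
  have hslit : (I*(T:ℂ)) ∈ Complex.slitPlane :=
    Complex.mem_slitPlane_iff.mpr (Or.inr (by simp [hT.ne']))
  exact ((continuousAt_cpow_const hslit).tendsto.comp hbase).mono_left nhdsWithin_le_nhds

lemma aux_C_tendsto {z : ℂ} (hz : -1 < z.re) {T : ℝ} (hT : 0 < T) :
    Tendsto (fun ε : ℝ => ∫ ξ : ℝ,
        ((|ξ| : ℝ) : ℂ) ^ z * Real.exp (-ε * |ξ|) * Complex.cos (T * ξ))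
      (nhdsWithin 0 (Ioi 0)) (nhds (Cfun z T)) := by
  have hform : Tendsto (fun ε : ℝ => Complex.Gamma (z+1) *
      (((ε:ℂ) - I*T) ^ (-(z+1)) + ((ε:ℂ) + I*T) ^ (-(z+1))))
      (nhdsWithin 0 (Ioi 0)) (nhds (Cfun z T)) :=
    ((aux_base_tendsto hT (-(z+1))).add (aux_base_tendsto' hT (-(z+1)))).const_mul _
  apply hform.congr'
  filter_upwards [self_mem_nhdsWithin] with ε hε
  exact (aux_C_integral hz hT hε).symm

lemma aux_S_tendsto {z : ℂ} (hz : -1 < z.re) {T : ℝ} (hT : 0 < T) :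
    Tendsto (fun ε : ℝ => ∫ ξ : ℝ,
        ((|ξ| : ℝ) : ℂ) ^ z * (ξ : ℂ) * Real.exp (-ε * |ξ|) * Complex.sin (T * ξ))
      (nhdsWithin 0 (Ioi 0)) (nhds (Sfun z T)) := by
  have hform : Tendsto (fun ε : ℝ => -I * Complex.Gamma (z+2) *
      (((ε:ℂ) - I*T) ^ (-(z+2)) - ((ε:ℂ) + I*T) ^ (-(z+2))))
      (nhdsWithin 0 (Ioi 0)) (nhds (Sfun z T)) :=
    ((aux_base_tendsto hT (-(z+2))).sub (aux_base_tendsto' hT (-(z+2)))).const_mul _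
  apply hform.congr'
  filter_upwards [self_mem_nhdsWithin] with ε hε
  exact (aux_S_integral hz hT hε).symm

lemma aux_log_diff {T : ℝ} (hT : 0 < T) :
    Complex.log (I*(T:ℂ)) - Complex.log (-(I*(T:ℂ))) = (Real.pi : ℂ) * I := by
  have h1 : (I*(T:ℂ)) = (T:ℂ) * I := mul_comm _ _
  have h2 : (-(I*(T:ℂ))) = (T:ℂ) * (-I) := by ring
  rw [h2, h1, Complex.log_ofReal_mul hT Complex.I_ne_zero,
      Complex.log_ofReal_mul hT (by simp : (-I:ℂ) ≠ 0), Complex.log_I, Complex.log_neg_I]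
  push_cast
  ring

lemma aux_z1_ne {z : ℂ} (hznorm : ‖z‖ < 1) : z + 1 ≠ 0 := by
  intro h
  have : z = -1 := by linear_combination h
  rw [this] at hznorm
  simp at hznorm

lemma aux_C_ne_zero {z : ℂ} (hznorm : ‖z‖ < 1) (hz0 : z ≠ 0) {T : ℝ} (hT : 0 < T) :
    Cfun z T ≠ 0 := by
  have hx : (-(I*(T:ℂ))) ≠ 0 := by
    simp [Complex.I_ne_zero, Complex.ofReal_ne_zero.mpr hT.ne']
  have hy : (I*(T:ℂ)) ≠ 0 := by
    simp [Complex.I_ne_zero, Complex.ofReal_ne_zero.mpr hT.ne']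
  have hGamma : Complex.Gamma (z+1) ≠ 0 := by
    apply Complex.Gamma_ne_zero
    intro k h
    have hzk : z = -(k+1) := by push_cast at h ⊢; linear_combination h
    rw [hzk] at hznorm
    have : ‖(-((k:ℂ)+1))‖ = (k:ℝ)+1 := by
      rw [norm_neg]
      have : ((k:ℂ)+1) = (((k:ℝ)+1 : ℝ) : ℂ) := by push_cast; ring
      rw [this, Complex.norm_real, Real.norm_eq_abs, abs_of_pos (by positivity)]
    rw [this] at hznorm
    have : (0:ℝ) ≤ (k:ℝ) := Nat.cast_nonneg k
    linarith
  have hsum : (-(I*(T:ℂ))) ^ (-(z+1)) + (I*(T:ℂ)) ^ (-(z+1)) ≠ 0 := by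
    intro hAB
    set w : ℂ := -(z+1) with hw
    set L₁ : ℂ := Complex.log (-(I*(T:ℂ))) with hL₁
    set L₂ : ℂ := Complex.log (I*(T:ℂ)) with hL₂
    rw [Complex.cpow_def_of_ne_zero hx, Complex.cpow_def_of_ne_zero hy] at hAB
    have h1 : Complex.exp (L₁*w) = -Complex.exp (L₂*w) :=
      eq_neg_of_add_eq_zero_left hAB
    have h2 : Complex.exp (L₁*w - L₂*w) = -1 := by
      rw [Complex.exp_sub, h1, neg_div, div_self (Complex.exp_ne_zero _)]
    have hdiff := aux_log_diff hT
    have h3 : L₁*w - L₂*w = (z+1) * Real.pi * I := by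
      have : L₁*w - L₂*w = (z+1) * (L₂ - L₁) := by rw [hw]; ring
      rw [this, hdiff]; ring
    rw [h3, ← Complex.exp_pi_mul_I] at h2
    obtain ⟨n, hn⟩ := Complex.exp_eq_exp_iff_exists_int.mp h2
    have hπI : ((Real.pi : ℂ) * I) ≠ 0 :=
      mul_ne_zero (Complex.ofReal_ne_zero.mpr Real.pi_ne_zero) Complex.I_ne_zero
    have hz2n : z = 2 * n := by
      have : z * ((Real.pi:ℂ) * I) = (2*n) * ((Real.pi:ℂ) * I) := by linear_combination hn
      exact mul_right_cancel₀ hπI this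
    have hn0 : n ≠ 0 := by
      intro h
      rw [h] at hz2n
      simp at hz2n
      exact hz0 hz2n
    have : (1:ℝ) ≤ ‖z‖ := by
      rw [hz2n]
      have : ((2*n : ℤ) : ℂ) = 2 * (n:ℂ) := by push_cast; ring
      rw [← this]
      rw [show ‖((2*n : ℤ) : ℂ)‖ = |((2*n : ℤ) : ℝ)| by
        rw [← Complex.ofReal_intCast, Complex.norm_real, Real.norm_eq_abs]]
      have h1 : (1:ℤ) ≤ |2*n| := Int.one_le_abs (by simpa using hn0)
      calc (1:ℝ) ≤ |((2*n : ℤ) : ℝ)| := by exact_mod_cast (by push_cast; exact_mod_cast h1 : (1:ℝ) ≤ |(2*(n:ℝ))|)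
        _ = _ := by push_cast; ring_nf
    linarith
  exact mul_ne_zero hGamma hsum

lemma aux_S_eq {z : ℂ} (hznorm : ‖z‖ < 1) {T : ℝ} (hT : 0 < T) :
    Sfun z T = ((z+1)/T) * Cfun z T := by
  have hz1 : z + 1 ≠ 0 := aux_z1_ne hznorm
  have hx : (-(I*(T:ℂ))) ≠ 0 := by
    simp [Complex.I_ne_zero, Complex.ofReal_ne_zero.mpr hT.ne']
  have hy : (I*(T:ℂ)) ≠ 0 := by
    simp [Complex.I_ne_zero, Complex.ofReal_ne_zero.mpr hT.ne']
  have hT0 : (T:ℂ) ≠ 0 := Complex.ofReal_ne_zero.mpr hT.ne'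
  rw [Sfun, Cfun, show z+2 = (z+1)+1 by ring, Complex.Gamma_add_one _ hz1]
  have e1 : (-(I*(T:ℂ))) ^ (-((z+1)+1)) = (-(I*(T:ℂ))) ^ (-(z+1)) * (I/T) := by
    rw [show -((z+1)+1) = -(z+1) + (-1) by ring, Complex.cpow_add _ _ hx,
      Complex.cpow_neg_one]
    congr 1
    rw [inv_neg, mul_inv, Complex.inv_I]
    ring
  have e2 : ((I*(T:ℂ))) ^ (-((z+1)+1)) = ((I*(T:ℂ))) ^ (-(z+1)) * (-(I/T)) := by
    rw [show -((z+1)+1) = -(z+1) + (-1) by ring, Complex.cpow_add _ _ hy,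
      Complex.cpow_neg_one]
    congr 1
    rw [mul_inv, Complex.inv_I]
    ring
  rw [e1, e2]
  set A := (-(I*(T:ℂ))) ^ (-(z+1)) with hA
  set B := ((I*(T:ℂ))) ^ (-(z+1)) with hB
  linear_combination (-((z+1) * Complex.Gamma (z+1) * (A+B) / (T:ℂ))) * Complex.I_mul_I

lemma aux_ratio {m : ℝ} {z : ℂ} (hznorm : ‖z‖ < 1) (hz0 : z ≠ 0) {T : ℝ} (hT : 0 < T) :
    (2 * (m:ℂ) * Cfun z T - 2 * I * Sfun z T) / (2 * Cfun z T) = m - I*(z+1)/T := by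
  have hC := aux_C_ne_zero hznorm hz0 hT
  have hT0 : (T:ℂ) ≠ 0 := Complex.ofReal_ne_zero.mpr hT.ne'
  rw [aux_S_eq hznorm hT]
  field_simp

/-- Mass of the free massive Schwinger model: with Abel-regularized integrals
`C(z,T)`, `S(z,T)`, `N = 2mC - 2iS`, `D = 2C`, one has
`lim_{T→∞} lim_{z→0} N/D = m`. -/
theorem stmt_13 (m : ℝ) (hm : 0 < m) :
    ∃ C S : ℂ → ℝ → ℂ,
      (∀ z : ℂ, -1 < z.re → ∀ T : ℝ, 0 < T →
        Tendsto
          (fun ε : ℝ => ∫ ξ : ℝ,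
            ((|ξ| : ℝ) : ℂ) ^ z * Real.exp (-ε * |ξ|) * Complex.cos (T * ξ))
          (nhdsWithin 0 (Ioi 0)) (nhds (C z T))) ∧
      (∀ z : ℂ, -1 < z.re → ∀ T : ℝ, 0 < T →
        Tendsto
          (fun ε : ℝ => ∫ ξ : ℝ,
            ((|ξ| : ℝ) : ℂ) ^ z * (ξ : ℂ) * Real.exp (-ε * |ξ|) * Complex.sin (T * ξ))
          (nhdsWithin 0 (Ioi 0)) (nhds (S z T))) ∧
      ∃ f : ℝ → ℂ,
        (∀ T : ℝ, 0 < T →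
          Tendsto
            (fun z : ℂ =>
              (2 * (m : ℂ) * C z T - 2 * Complex.I * S z T) / (2 * C z T))
            (nhdsWithin 0 {z : ℂ | z ≠ 0}) (nhds (f T))) ∧
        Tendsto f atTop (nhds ((m : ℝ) : ℂ)) := by
  refine ⟨Cfun, Sfun, fun z hz T hT => aux_C_tendsto hz hT,
    fun z hz T hT => aux_S_tendsto hz hT,
    fun T => (m:ℂ) - I/(T:ℂ), fun T hT => ?_, ?_⟩
  · have hev : ∀ᶠ z in nhdsWithin (0:ℂ) {z : ℂ | z ≠ 0},
        (m:ℂ) - I*(z+1)/T = (2 * (m:ℂ) * Cfun z T - 2 * I * Sfun z T) / (2 * Cfun z T) := by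
      have hball : ∀ᶠ z : ℂ in nhds 0, ‖z‖ < 1 := by
        filter_upwards [Metric.ball_mem_nhds (0:ℂ) one_pos] with z hz using by
          simpa [mem_ball_zero_iff] using hz
      filter_upwards [eventually_nhdsWithin_of_eventually_nhds hball, self_mem_nhdsWithin]
        with z h1 h2
      exact (aux_ratio h1 h2 hT).symm
    have htend : Tendsto (fun z : ℂ => (m:ℂ) - I*(z+1)/T) (nhdsWithin 0 {z : ℂ | z ≠ 0})
        (nhds ((m:ℂ) - I/T)) := by
      have hc : Continuous fun z : ℂ => (m:ℂ) - I*(z+1)/T := by continuity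
      simpa using (hc.tendsto 0).mono_left (nhdsWithin_le_nhds (s := {z : ℂ | z ≠ 0}))
    exact htend.congr' hev
  · have h0 : Tendsto (fun T : ℝ => (T:ℝ)⁻¹) atTop (nhds 0) := tendsto_inv_atTop_zero
    have h1 : Tendsto (fun T : ℝ => ((T⁻¹ : ℝ) : ℂ)) atTop (nhds 0) := by
      simpa [Function.comp_def] using (Complex.continuous_ofReal.tendsto 0).comp h0
    have h2 : Tendsto (fun T : ℝ => (m:ℂ) - I * ((T⁻¹:ℝ):ℂ)) atTop (nhds ((m:ℂ) - I*0)) :=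
      tendsto_const_nhds.sub (h1.const_mul I)
    simp only [mul_zero, sub_zero] at h2
    apply h2.congr
    intro T
    rw [Complex.ofReal_inv]
    ring
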